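/- Let μ be a measure on a measurable space Z and let ψ : Z → ℝ^m be measurable with each product ψ_i ψ_j μ-integrable. Define the real symmetric m×m matrix B by B_{ij} = ∫ ψ_i ψ_j dμ, and let B† be the Moore–Penrose pseudoinverse of B. Then (B B†) ψ(z) = ψ(z) for μ-almost every z ∈ Z; equivalently, the function z ↦ (B B† − I) ψ(z) vanishes μ-almost everywhere. -/

import Mathlib

/-!
Since `B B† B = B`, every row `r` of `B B† - 1` satisfies `rᵀ B = 0`, hence `B r = 0` because `B`
is symmetric. For a Gram matrix `rᵀ B r = ∫ (r ⬝ ψ)² dμ`, so `r ⬝ ψ` vanishes almost everywhere,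
and `r ⬝ ψ(z)` is a coordinate of `(B B† - 1) ψ(z)`.
-/

open Matrix MeasureTheory

/-- `P` is a Moore–Penrose pseudoinverse of `M`: the four Penrose conditions. -/
def IsMoorePenrose {α β : Type*} [Fintype α] [Fintype β]
    (M : Matrix α β ℝ) (P : Matrix β α ℝ) : Prop :=
  M * P * M = M ∧ P * M * P = P ∧ (M * P)ᵀ = M * P ∧ (P * M)ᵀ = P * M

theorem dotProduct_sq_eq_sum {n : Type*} [Fintype n] (v w : n → ℝ) :
    (v ⬝ᵥ w) ^ 2 = ∑ i, ∑ j, v i * v j * (w i * w j) := by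
  rw [sq, dotProduct, Finset.sum_mul_sum]
  exact Finset.sum_congr rfl fun i _ => Finset.sum_congr rfl fun j _ => by ring

namespace MeasureTheory

variable {Z : Type*} [MeasurableSpace Z] {n : Type*}

noncomputable def gramMatrix (μ : Measure Z) (ψ : Z → n → ℝ) : Matrix n n ℝ :=
  Matrix.of fun i j => ∫ z, ψ z i * ψ z j ∂μ

theorem gramMatrix_transpose (μ : Measure Z) (ψ : Z → n → ℝ) :
    (gramMatrix μ ψ)ᵀ = gramMatrix μ ψ := by
  ext i j
  simp only [gramMatrix, transpose_apply, of_apply, mul_comm]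

variable [Fintype n] {μ : Measure Z} {ψ : Z → n → ℝ}

theorem integrable_dotProduct_sq
    (hint : ∀ i j, Integrable (fun z => ψ z i * ψ z j) μ) (v : n → ℝ) :
    Integrable (fun z => (v ⬝ᵥ ψ z) ^ 2) μ := by
  simp_rw [dotProduct_sq_eq_sum]
  exact integrable_finsetSum _ fun i _ => integrable_finsetSum _ fun j _ =>
    (hint i j).const_mul _

theorem integral_dotProduct_sq
    (hint : ∀ i j, Integrable (fun z => ψ z i * ψ z j) μ) (v : n → ℝ) :
    ∫ z, (v ⬝ᵥ ψ z) ^ 2 ∂μ = v ⬝ᵥ gramMatrix μ ψ *ᵥ v := by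
  simp_rw [dotProduct_sq_eq_sum]
  rw [integral_finsetSum _ fun i _ => integrable_finsetSum _ fun j _ => (hint i j).const_mul _]
  simp_rw [integral_finsetSum _ fun j _ => (hint _ j).const_mul _, integral_const_mul]
  simp only [dotProduct, mulVec, gramMatrix, of_apply, Finset.mul_sum]
  exact Finset.sum_congr rfl fun i _ => Finset.sum_congr rfl fun j _ => by ring

theorem ae_dotProduct_eq_zero_of_gramMatrix_mulVec_eq_zero
    (hint : ∀ i j, Integrable (fun z => ψ z i * ψ z j) μ)
    {v : n → ℝ} (hv : gramMatrix μ ψ *ᵥ v = 0) : ∀ᵐ z ∂μ, v ⬝ᵥ ψ z = 0 := by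
  have hsq : (fun z => (v ⬝ᵥ ψ z) ^ 2) =ᵐ[μ] 0 :=
    (integral_eq_zero_iff_of_nonneg (fun z => sq_nonneg _) (integrable_dotProduct_sq hint v)).mp
      (by rw [integral_dotProduct_sq hint, hv, dotProduct_zero])
  filter_upwards [hsq] with z hz
  exact pow_eq_zero_iff two_ne_zero |>.mp hz

theorem ae_mulVec_eq_zero_of_mul_gramMatrix_eq_zero {m : Type*} [Countable m]
    (hint : ∀ i j, Integrable (fun z => ψ z i * ψ z j) μ)
    {E : Matrix m n ℝ} (hE : E * gramMatrix μ ψ = 0) : ∀ᵐ z ∂μ, E *ᵥ ψ z = 0 := by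
  have hrow : ∀ i, gramMatrix μ ψ *ᵥ E i = 0 := fun i => by
    rw [← vecMul_transpose, gramMatrix_transpose, ← mul_apply_eq_vecMul, hE]
    rfl
  have hrows := ae_all_iff.mpr fun i => ae_dotProduct_eq_zero_of_gramMatrix_mulVec_eq_zero hint (hrow i)
  filter_upwards [hrows] with z hz
  exact funext hz

end MeasureTheory

theorem stmt_4_general {Z : Type*} [MeasurableSpace Z] (μ : Measure Z) {m : ℕ}
    (ψ : Z → Fin m → ℝ)
    (hint : ∀ i j, Integrable (fun z => ψ z i * ψ z j) μ)
    (B Bdag : Matrix (Fin m) (Fin m) ℝ)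
    (hB : ∀ i j, B i j = ∫ z, ψ z i * ψ z j ∂μ)
    (hBdag : IsMoorePenrose B Bdag) :
    (∀ᵐ z ∂μ, (B * Bdag) *ᵥ ψ z = ψ z) ∧
      (∀ᵐ z ∂μ, (B * Bdag - 1) *ᵥ ψ z = 0) := by
  obtain rfl : B = gramMatrix μ ψ := Matrix.ext hB
  have hker : (gramMatrix μ ψ * Bdag - 1) * gramMatrix μ ψ = 0 := by
    rw [sub_mul, hBdag.1, one_mul, sub_self]
  have hvanish := ae_mulVec_eq_zero_of_mul_gramMatrix_eq_zero hint hker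
  refine ⟨?_, hvanish⟩
  filter_upwards [hvanish] with z hz
  rwa [sub_mulVec, one_mulVec, sub_eq_zero] at hz

/-- If `B` is the Gram matrix of `ψ` with respect to `μ` and `B†` its
Moore–Penrose pseudoinverse, then `(B B†) ψ(z) = ψ(z)` for `μ`-almost every `z`, i.e.
`(B B† − I) ψ` vanishes `μ`-almost everywhere. -/
theorem stmt_4 {Z : Type*} [MeasurableSpace Z] (μ : Measure Z) {m : ℕ}
    (ψ : Z → Fin m → ℝ)
    (hmeas : ∀ i, Measurable fun z => ψ z i)
    (hint : ∀ i j, Integrable (fun z => ψ z i * ψ z j) μ)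
    (B Bdag : Matrix (Fin m) (Fin m) ℝ)
    (hB : ∀ i j, B i j = ∫ z, ψ z i * ψ z j ∂μ)
    (hBdag : IsMoorePenrose B Bdag) :
    (∀ᵐ z ∂μ, (B * Bdag) *ᵥ ψ z = ψ z) ∧
      (∀ᵐ z ∂μ, (B * Bdag - 1) *ᵥ ψ z = 0) :=
  stmt_4_general μ ψ hint B Bdag hB hBdag
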